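/- (Inner strong duality for a fixed support.) Fix z ∈ {0,1}^n and suppose the set {x ∈ ℝ^n : Ax ≤ b and x_j = 0 for every j with z_j = 0} is nonempty. Then the infimum of ⟨c,x⟩ + Σ_{i=1}^k λ_i y_i² + η^{-1}‖x‖₂² over all (x,y) ∈ ℝ^n × ℝ^k satisfying Ax ≤ b, x_j = 0 for every j with z_j = 0, and √λ_i·y_i = √λ_i·⟨V e_i, x⟩ for each i ∈ {1,…,k}, equals sup over α ∈ ℝ^k and β ∈ ℝ^m with β ≥ 0 of L(z, α, β). -/

import Mathlib

open Matrix Finset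

noncomputable def gam {n k m : ℕ} (V : Matrix (Fin n) (Fin k) ℝ) (lam : Fin k → ℝ)
    (c : Fin n → ℝ) (A : Matrix (Fin m) (Fin n) ℝ) (α : Fin k → ℝ) (β : Fin m → ℝ) :
    Fin n → ℝ :=
  c + V.mulVec (fun i => Real.sqrt (lam i) * α i) + Aᵀ.mulVec β

noncomputable def Lfun {n k m : ℕ} (V : Matrix (Fin n) (Fin k) ℝ) (lam : Fin k → ℝ)
    (c : Fin n → ℝ) (A : Matrix (Fin m) (Fin n) ℝ) (b : Fin m → ℝ) (η : ℝ)
    (z : Fin n → ℝ) (α : Fin k → ℝ) (β : Fin m → ℝ) : ℝ :=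
  -(β ⬝ᵥ b) - (1/4) * (∑ i, (α i)^2) - (η/4) * (∑ j, z j * (gam V lam c A α β j)^2)

noncomputable def gfun {n k : ℕ} (V : Matrix (Fin n) (Fin k) ℝ) (lam : Fin k → ℝ)
    (c : Fin n → ℝ) (η : ℝ) (x : Fin n → ℝ) : ℝ :=
  c ⬝ᵥ x + (∑ i, lam i * ((fun j => V j i) ⬝ᵥ x)^2) + η⁻¹ * (∑ j, (x j)^2)

lemma gfun_continuous {n k : ℕ} (V : Matrix (Fin n) (Fin k) ℝ) (lam : Fin k → ℝ)
    (c : Fin n → ℝ) (η : ℝ) : Continuous (gfun V lam c η) := by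
  unfold gfun dotProduct
  fun_prop

lemma gfun_lb {n k : ℕ} (V : Matrix (Fin n) (Fin k) ℝ) (lam : Fin k → ℝ)
    (hlam : ∀ i, 0 ≤ lam i) (c : Fin n → ℝ) (η : ℝ) (hη : 0 < η) (x : Fin n → ℝ) :
    (2*η)⁻¹ * (∑ j, (x j)^2) - (η/2) * (∑ j, (c j)^2) ≤ gfun V lam c η x := by
  have h1 : (0:ℝ) ≤ ∑ i, lam i * ((fun j => V j i) ⬝ᵥ x)^2 :=
    Finset.sum_nonneg fun i _ => mul_nonneg (hlam i) (sq_nonneg _)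
  have hη' : (0:ℝ) < 2*η := by linarith
  have h2 : ∀ j : Fin n, (0:ℝ) ≤ (2*η)⁻¹ * (x j)^2 + c j * x j + (η/2) * (c j)^2 := by
    intro j
    have key : (2*η)⁻¹ * (x j)^2 + c j * x j + (η/2) * (c j)^2
        = (x j + η * c j)^2 / (2*η) := by
      field_simp; ring
    rw [key]; positivity
  have h3 : (0:ℝ) ≤ ∑ j, ((2*η)⁻¹ * (x j)^2 + c j * x j + (η/2) * (c j)^2) :=
    Finset.sum_nonneg fun j _ => h2 j
  rw [Finset.sum_add_distrib, Finset.sum_add_distrib, ← Finset.mul_sum, ← Finset.mul_sum] at h3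
  have h4 : η⁻¹ * (∑ j, (x j)^2) = (2*η)⁻¹ * (∑ j, (x j)^2) + (2*η)⁻¹ * (∑ j, (x j)^2) := by
    rw [← add_mul]
    congr 1
    field_simp
    norm_num
  have h5 : c ⬝ᵥ x = ∑ j, c j * x j := rfl
  unfold gfun
  rw [h5]
  linarith

noncomputable def Pfun {n k m : ℕ} (V : Matrix (Fin n) (Fin k) ℝ) (lam : Fin k → ℝ)
    (c : Fin n → ℝ) (A : Matrix (Fin m) (Fin n) ℝ) (b : Fin m → ℝ) (η t : ℝ)
    (x : Fin n → ℝ) : ℝ :=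
  gfun V lam c η x + t * (∑ i, (max 0 (A.mulVec x i - b i))^2)

lemma Pfun_continuous {n k m : ℕ} (V : Matrix (Fin n) (Fin k) ℝ) (lam : Fin k → ℝ)
    (c : Fin n → ℝ) (A : Matrix (Fin m) (Fin n) ℝ) (b : Fin m → ℝ) (η t : ℝ) :
    Continuous (Pfun V lam c A b η t) := by
  unfold Pfun gfun Matrix.mulVec
  simp only [dotProduct]
  fun_prop

lemma hasDerivAt_maxsq (u : ℝ) : HasDerivAt (fun v : ℝ => (max 0 v)^2) (2 * max 0 u) u := by
  rcases lt_trichotomy u 0 with h | h | h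
  · have he : (fun v : ℝ => (max 0 v)^2) =ᶠ[nhds u] fun _ => (0:ℝ) := by
      filter_upwards [Iio_mem_nhds h] with v hv
      rw [Set.mem_Iio] at hv
      simp [max_eq_left hv.le]
    have h0 : HasDerivAt (fun _ : ℝ => (0:ℝ)) 0 u := hasDerivAt_const u 0
    have := h0.congr_of_eventuallyEq he
    simpa [max_eq_left h.le] using this
  · subst h
    rw [hasDerivAt_iff_isLittleO]
    rw [Asymptotics.isLittleO_iff]
    intro ε hε
    filter_upwards [Metric.ball_mem_nhds (0:ℝ) hε] with v hv
    rw [Metric.mem_ball, Real.dist_eq, sub_zero] at hv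
    have h1 : (max 0 v)^2 ≤ |v| * |v| := by
      rcases le_or_gt v 0 with hv0 | hv0
      · rw [max_eq_left hv0]; nlinarith [abs_nonneg v]
      · rw [max_eq_right hv0.le]
        nlinarith [abs_nonneg v, le_abs_self v, neg_abs_le v]
    have h2 : (0:ℝ) ≤ (max 0 v)^2 := by positivity
    have h3 : ε * |v| = ε * ‖v‖ := by rw [Real.norm_eq_abs]
    simp only [max_self, sub_zero, smul_zero, mul_zero]
    calc ‖(max 0 v)^2 - 0^2‖ = (max 0 v)^2 := by
            rw [Real.norm_eq_abs]; simp [abs_of_nonneg h2]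
      _ ≤ |v| * |v| := h1
      _ ≤ ε * |v| := by nlinarith [abs_nonneg v]
      _ = ε * ‖v‖ := h3
  · have he : (fun v : ℝ => (max 0 v)^2) =ᶠ[nhds u] fun v => v^2 := by
      filter_upwards [Ioi_mem_nhds h] with v hv
      rw [Set.mem_Ioi] at hv
      simp [max_eq_right hv.le]
    have hp : HasDerivAt (fun v : ℝ => v^2) (2*u) u := by
      simpa using hasDerivAt_pow 2 u
    have := hp.congr_of_eventuallyEq he
    simpa [max_eq_right h.le] using this

lemma hasDerivAt_maxsq_affine (a q : ℝ) :
    HasDerivAt (fun s : ℝ => (max 0 (a + s * q))^2) (2 * max 0 a * q) 0 := by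
  have h1 : HasDerivAt (fun s : ℝ => a + s * q) q 0 := by
    simpa using ((hasDerivAt_id (0:ℝ)).mul_const q).const_add a
  have h2 := (hasDerivAt_maxsq (a + 0 * q)).comp 0 h1
  simpa [Function.comp_def, mul_assoc] using h2

lemma hasDerivAt_sq_affine (a q : ℝ) :
    HasDerivAt (fun s : ℝ => (a + s * q)^2) (2 * a * q) 0 := by
  have h1 : HasDerivAt (fun s : ℝ => a + s * q) q 0 := by
    simpa using ((hasDerivAt_id (0:ℝ)).mul_const q).const_add a
  have h2 := h1.fun_pow 2
  simpa [mul_assoc] using h2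

lemma isCompact_sumsq {n : ℕ} (R2 : ℝ) :
    IsCompact {x : Fin n → ℝ | ∑ j, (x j)^2 ≤ R2} := by
  have hclosed : IsClosed {x : Fin n → ℝ | ∑ j, (x j)^2 ≤ R2} := by
    apply isClosed_le _ continuous_const
    fun_prop
  have hsub : {x : Fin n → ℝ | ∑ j, (x j)^2 ≤ R2}
      ⊆ Metric.closedBall 0 (Real.sqrt R2) := by
    intro x hx
    rw [Metric.mem_closedBall, dist_zero_right]
    rw [pi_norm_le_iff_of_nonneg (Real.sqrt_nonneg _)]
    intro j
    rw [Real.norm_eq_abs, ← Real.sqrt_sq_eq_abs]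
    apply Real.sqrt_le_sqrt
    calc (x j)^2 ≤ ∑ l, (x l)^2 :=
          Finset.single_le_sum (fun l _ => sq_nonneg (x l)) (Finset.mem_univ j)
      _ ≤ R2 := hx
  exact (isCompact_closedBall 0 _).of_isClosed_subset hclosed hsub

lemma penalty_key {n k m : ℕ} (lam : Fin k → ℝ) (hlam : ∀ i, 0 ≤ lam i)
    (V : Matrix (Fin n) (Fin k) ℝ) (c : Fin n → ℝ)
    (A : Matrix (Fin m) (Fin n) ℝ) (b : Fin m → ℝ) (η : ℝ) (hη : 0 < η)
    (z : Fin n → ℝ) (x₀ : Fin n → ℝ)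
    (hx₀A : ∀ i, A.mulVec x₀ i ≤ b i) (hx₀z : ∀ j, z j = 0 → x₀ j = 0)
    (t : ℝ) (ht : 0 < t) :
    ∃ x : Fin n → ℝ,
      (∀ j, z j = 0 → x j = 0) ∧
      gfun V lam c η x ≤ gfun V lam c η x₀ ∧
      (∑ j, (x j)^2) ≤ 2*η*(gfun V lam c η x₀ + (η/2) * (∑ j, (c j)^2)) + 1 ∧
      t * (∑ i, (max 0 (A.mulVec x i - b i))^2)
          ≤ gfun V lam c η x₀ + (η/2) * (∑ j, (c j)^2) ∧
      (∀ j, z j ≠ 0 →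
        c j + (∑ i, 2 * lam i * ((fun l => V l i) ⬝ᵥ x) * V j i) + 2 * η⁻¹ * x j
          + (∑ i, 2 * t * max 0 (A.mulVec x i - b i) * A i j) = 0) := by
  classical
  set g := gfun V lam c η with hg
  set P := Pfun V lam c A b η t with hP
  set M := gfun V lam c η x₀ with hM
  set C₀ := (η/2) * (∑ j, (c j)^2) with hC₀
  have hC₀0 : 0 ≤ C₀ := by
    apply mul_nonneg (by positivity)
    exact Finset.sum_nonneg fun j _ => sq_nonneg _
  have hMC : -C₀ ≤ M := by
    have := gfun_lb V lam hlam c η hη x₀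
    have h0 : 0 ≤ (2*η)⁻¹ * (∑ j, (x₀ j)^2) := by positivity
    rw [← hM, ← hC₀] at *
    linarith
  set R2 := 2*η*(M + C₀) + 1 with hR2
  have hR2pos : 0 < R2 := by nlinarith
  set E : Set (Fin n → ℝ) := {x | ∀ j, z j = 0 → x j = 0} with hE
  have hEclosed : IsClosed E := by
    have hEeq : E = ⋂ j : Fin n, {x : Fin n → ℝ | z j = 0 → x j = 0} := by
      ext x; simp [hE, Set.mem_iInter]
    rw [hEeq]
    apply isClosed_iInter
    intro j
    by_cases hj : z j = 0
    · simp only [hj, forall_true_left]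
      exact isClosed_eq (continuous_apply j) continuous_const
    · simp only [hj]
      simp [hj]
  set B : Set (Fin n → ℝ) := {x | ∑ j, (x j)^2 ≤ R2} with hB
  have hBcompact : IsCompact B := by
    have hclosed : IsClosed B := by
      apply isClosed_le _ continuous_const
      fun_prop
    have hsub : B ⊆ Metric.closedBall 0 (Real.sqrt R2) := by
      intro x hx
      rw [Metric.mem_closedBall, dist_zero_right]
      rw [pi_norm_le_iff_of_nonneg (Real.sqrt_nonneg _)]
      intro j
      rw [Real.norm_eq_abs, ← Real.sqrt_sq_eq_abs]
      apply Real.sqrt_le_sqrt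
      calc (x j)^2 ≤ ∑ l, (x l)^2 :=
            Finset.single_le_sum (fun l _ => sq_nonneg (x l)) (Finset.mem_univ j)
        _ ≤ R2 := hx
    exact (isCompact_closedBall 0 _).of_isClosed_subset hclosed hsub
  have hx₀E : x₀ ∈ E := hx₀z
  have hx₀B : x₀ ∈ B := by
    have hlb := gfun_lb V lam hlam c η hη x₀
    rw [← hM, ← hC₀] at hlb
    have hb2 : (∑ j, (x₀ j)^2) ≤ 2*η*(M + C₀) := by
      have h2η : (0:ℝ) < 2*η := by linarith
      rw [← sub_nonneg]
      have e1 : 2*η*(M+C₀) - (∑ j, (x₀ j)^2)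
          = 2*η*((M+C₀) - (2*η)⁻¹ * (∑ j, (x₀ j)^2)) := by
        field_simp
      rw [e1]
      apply mul_nonneg h2η.le
      linarith
    simp only [hB, Set.mem_setOf_eq]
    linarith
  have hPx₀ : P x₀ = M := by
    have hpen : ∀ i, max 0 (A.mulVec x₀ i - b i) = 0 := by
      intro i
      rw [max_eq_left]
      linarith [hx₀A i]
    simp only [hP, Pfun, hpen]
    simp [hM]
  have hEB : IsCompact (E ∩ B) := hBcompact.inter_left hEclosed
  have hne : (E ∩ B).Nonempty := ⟨x₀, hx₀E, hx₀B⟩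
  obtain ⟨x, hxEB, hxmin⟩ :=
    hEB.exists_isMinOn hne ((Pfun_continuous V lam c A b η t).continuousOn)
  have hxE : x ∈ E := hxEB.1
  have hxB : (∑ j, (x j)^2) ≤ R2 := hxEB.2
  have hPle : P x ≤ M := by
    rw [← hPx₀]
    exact hxmin ⟨hx₀E, hx₀B⟩
  have hpen_nonneg : 0 ≤ ∑ i, (max 0 (A.mulVec x i - b i))^2 :=
    Finset.sum_nonneg fun i _ => sq_nonneg _
  have hgle : g x ≤ M := by
    have hgP : g x ≤ P x := by
      simp only [hP, Pfun, ← hg]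
      nlinarith
    linarith
  have hglb : -C₀ ≤ g x := by
    have := gfun_lb V lam hlam c η hη x
    have h0 : 0 ≤ (2*η)⁻¹ * (∑ j, (x j)^2) := by positivity
    rw [← hg, ← hC₀] at *
    linarith
  have hpenbd : t * (∑ i, (max 0 (A.mulVec x i - b i))^2) ≤ M + C₀ := by
    have hPx : P x = g x + t * (∑ i, (max 0 (A.mulVec x i - b i))^2) := rfl
    linarith
  have hglobal : ∀ y ∈ E, P x ≤ P y := by
    intro y hyE
    by_cases hyB : y ∈ B
    · exact hxmin ⟨hyE, hyB⟩
    · have hy2 : R2 < ∑ j, (y j)^2 := by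
        simp only [hB, Set.mem_setOf_eq, not_le] at hyB
        exact hyB
      have hlb := gfun_lb V lam hlam c η hη y
      have h2η : (0:ℝ) < 2*η := by linarith
      have hgy : M < g y := by
        have e1 : (2*η)⁻¹ * R2 = M + C₀ + (2*η)⁻¹ := by
          rw [hR2]; field_simp
        have e2 : (2*η)⁻¹ * R2 ≤ (2*η)⁻¹ * ∑ j, (y j)^2 :=
          mul_le_mul_of_nonneg_left hy2.le (by positivity)
        have e3 : (0:ℝ) < (2*η)⁻¹ := by positivity
        rw [← hg, ← hC₀] at hlb
        linarith
      have hgyP : g y ≤ P y := by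
        have hp : 0 ≤ ∑ i, (max 0 (A.mulVec y i - b i))^2 :=
          Finset.sum_nonneg fun i _ => sq_nonneg _
        simp only [hP, Pfun, ← hg]
        nlinarith
      linarith
  have hstat : ∀ j, z j ≠ 0 →
      c j + (∑ i, 2 * lam i * ((fun l => V l i) ⬝ᵥ x) * V j i) + 2 * η⁻¹ * x j
        + (∑ i, 2 * t * max 0 (A.mulVec x i - b i) * A i j) = 0 := by
    intro j hj
    set e : Fin n → ℝ := Pi.single j 1 with he
    have hdir : ∀ s : ℝ, x + s • e ∈ E := by
      intro s l hl
      have hlj : l ≠ j := fun h => hj (h ▸ hl)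
      simp [he, Pi.single_apply, hlj, hxE l hl]
    set φ : ℝ → ℝ := fun s => P (x + s • e) with hφ
    have hmin : IsLocalMin φ 0 := by
      apply Filter.Eventually.of_forall
      intro s
      simp only [hφ]
      have h0 : x + (0:ℝ) • e = x := by simp
      rw [h0]
      exact hglobal _ (hdir s)
    have hrw : φ = fun s =>
        (c ⬝ᵥ x + s * (c ⬝ᵥ e))
        + (∑ i, lam i * (((fun l => V l i) ⬝ᵥ x) + s * ((fun l => V l i) ⬝ᵥ e))^2)
        + η⁻¹ * (∑ l, (x l + s * e l)^2)
        + t * (∑ i, (max 0 ((A.mulVec x i - b i) + s * (A.mulVec e i)))^2) := by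
      have hc' : ∀ s : ℝ, c ⬝ᵥ (x + s • e) = c ⬝ᵥ x + s * (c ⬝ᵥ e) := fun s => by
        rw [dotProduct_add, dotProduct_smul, smul_eq_mul]
      have hv' : ∀ (s : ℝ) (i : Fin k), (fun l => V l i) ⬝ᵥ (x + s • e)
          = ((fun l => V l i) ⬝ᵥ x) + s * ((fun l => V l i) ⬝ᵥ e) := fun s i => by
        rw [dotProduct_add, dotProduct_smul, smul_eq_mul]
      have hxl' : ∀ (s : ℝ) (l : Fin n), (x + s • e) l = x l + s * e l := fun s l => by
        simp
      have hA'' : ∀ (s : ℝ) (i : Fin m), A.mulVec (x + s • e) i - b i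
          = (A.mulVec x i - b i) + s * (A.mulVec e i) := fun s i => by
        rw [Matrix.mulVec_add, Matrix.mulVec_smul, Pi.add_apply, Pi.smul_apply,
          smul_eq_mul]
        ring
      funext s
      show Pfun V lam c A b η t (x + s • e) = _
      rw [Pfun, gfun]
      simp only [hc' s, hv' s, hxl' s, hA'' s]
    set D : ℝ := (c ⬝ᵥ e)
        + (∑ i, 2 * ((fun l => V l i) ⬝ᵥ x) * ((fun l => V l i) ⬝ᵥ e) * lam i)
        + η⁻¹ * (∑ l, 2 * x l * e l)
        + t * (∑ i, 2 * max 0 (A.mulVec x i - b i) * (A.mulVec e i)) with hD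
    have hderiv : HasDerivAt φ D 0 := by
      rw [hrw, hD]
      apply HasDerivAt.add
      apply HasDerivAt.add
      apply HasDerivAt.add
      · simpa using ((hasDerivAt_id (0:ℝ)).mul_const (c ⬝ᵥ e)).const_add (c ⬝ᵥ x)
      · apply HasDerivAt.fun_sum
        intro i _
        have := (hasDerivAt_sq_affine ((fun l => V l i) ⬝ᵥ x)
          ((fun l => V l i) ⬝ᵥ e)).const_mul (lam i)
        convert this using 1
        · rfl
        ring
      · apply HasDerivAt.const_mul
        apply HasDerivAt.fun_sum
        intro l _
        exact hasDerivAt_sq_affine (x l) (e l)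
      · apply HasDerivAt.const_mul
        apply HasDerivAt.fun_sum
        intro i _
        exact hasDerivAt_maxsq_affine _ _
    have hD0 : D = 0 := hmin.hasDerivAt_eq_zero hderiv
    have hce : c ⬝ᵥ e = c j := by simp [he, dotProduct, Pi.single_apply]
    have hve : ∀ i, (fun l => V l i) ⬝ᵥ e = V j i := by
      intro i; simp [he, dotProduct, Pi.single_apply]
    have hxe : (∑ l, 2 * x l * e l) = 2 * x j := by
      simp [he, Pi.single_apply, mul_ite, Finset.sum_ite_eq']
    have hAe : ∀ i, A.mulVec e i = A i j := by
      intro i; simp [he, Matrix.mulVec, dotProduct, Pi.single_apply]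
    rw [hD, hce, hxe] at hD0
    simp only [hve, hAe] at hD0
    have e1 : (∑ i, 2 * lam i * ((fun l => V l i) ⬝ᵥ x) * V j i)
        = ∑ i, 2 * ((fun l => V l i) ⬝ᵥ x) * V j i * lam i := by
      apply Finset.sum_congr rfl
      intro i _
      ring
    have e2 : (∑ i, 2 * t * max 0 (A.mulVec x i - b i) * A i j)
        = t * ∑ i, 2 * max 0 (A.mulVec x i - b i) * A i j := by
      rw [Finset.mul_sum]
      apply Finset.sum_congr rfl
      intro i _
      ring
    rw [e1, e2]
    linarith [hD0]
  exact ⟨x, hxE, hgle, hxB, hpenbd, hstat⟩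

lemma weak_dual {n k m : ℕ} (lam : Fin k → ℝ) (hlam : ∀ i, 0 ≤ lam i)
    (V : Matrix (Fin n) (Fin k) ℝ) (c : Fin n → ℝ)
    (A : Matrix (Fin m) (Fin n) ℝ) (b : Fin m → ℝ) (η : ℝ) (hη : 0 < η)
    (z : Fin n → ℝ) (hz : ∀ j, z j = 0 ∨ z j = 1)
    (α : Fin k → ℝ) (β : Fin m → ℝ) (hβ : ∀ i, 0 ≤ β i)
    (x : Fin n → ℝ) (y : Fin k → ℝ)
    (hA : ∀ i, A.mulVec x i ≤ b i) (hzx : ∀ j, z j = 0 → x j = 0)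
    (hy : ∀ i, Real.sqrt (lam i) * y i = Real.sqrt (lam i) * ((fun j => V j i) ⬝ᵥ x)) :
    Lfun V lam c A b η z α β
      ≤ c ⬝ᵥ x + (∑ i, lam i * (y i)^2) + η⁻¹ * (∑ j, (x j)^2) := by
  classical
  set γ := gam V lam c A α β with hγ
  set w : Fin k → ℝ := fun i => Real.sqrt (lam i) * α i with hw
  -- T1 nonneg
  have hT1 : ∀ j, 0 ≤ η⁻¹ * (x j)^2 + (η/4) * (z j * (γ j)^2) + γ j * x j := by
    intro j
    rcases hz j with h0 | h1
    · rw [hzx j h0, h0]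
      simp
    · rw [h1]
      have key : η⁻¹ * (x j)^2 + (η/4) * (1 * (γ j)^2) + γ j * x j
          = (x j + (η/2) * γ j)^2 / η := by
        field_simp
        ring
      rw [key]
      positivity
  have hS1 : 0 ≤ η⁻¹ * (∑ j, (x j)^2) + (η/4) * (∑ j, z j * (γ j)^2)
      + ∑ j, γ j * x j := by
    have := Finset.sum_nonneg (fun j (_ : j ∈ Finset.univ) => hT1 j)
    rw [Finset.sum_add_distrib, Finset.sum_add_distrib, ← Finset.mul_sum,
      ← Finset.mul_sum] at this
    exact this
  -- T2 nonneg
  have hT2 : ∀ i, 0 ≤ lam i * (y i)^2 + (1/4) * (α i)^2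
      - α i * (Real.sqrt (lam i) * y i) := by
    intro i
    nlinarith [sq_nonneg (Real.sqrt (lam i) * y i - α i / 2), Real.sq_sqrt (hlam i)]
  have hS2 : 0 ≤ (∑ i, lam i * (y i)^2) + (1/4) * (∑ i, (α i)^2)
      - ∑ i, α i * (Real.sqrt (lam i) * y i) := by
    have := Finset.sum_nonneg (fun i (_ : i ∈ Finset.univ) => hT2 i)
    rw [Finset.sum_sub_distrib, Finset.sum_add_distrib, ← Finset.mul_sum] at this
    exact this
  -- T3 nonneg
  have hS3 : 0 ≤ β ⬝ᵥ b - β ⬝ᵥ A.mulVec x := by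
    have : 0 ≤ ∑ i, β i * (b i - A.mulVec x i) :=
      Finset.sum_nonneg fun i _ => mul_nonneg (hβ i) (by linarith [hA i])
    have e : ∑ i, β i * (b i - A.mulVec x i) = β ⬝ᵥ b - β ⬝ᵥ A.mulVec x := by
      simp only [dotProduct, ← Finset.sum_sub_distrib]
      apply Finset.sum_congr rfl
      intro i _
      ring
    linarith [e ▸ this]
  -- key sum identities
  have key1 : ∑ j, V.mulVec w j * x j = ∑ i, α i * (Real.sqrt (lam i) * y i) := by
    have e1 : ∑ j, V.mulVec w j * x j = ∑ j, ∑ i, V j i * w i * x j := by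
      apply Finset.sum_congr rfl
      intro j _
      rw [Matrix.mulVec, dotProduct, Finset.sum_mul]
    rw [e1, Finset.sum_comm]
    apply Finset.sum_congr rfl
    intro i _
    have e2 : ∑ j, V j i * w i * x j = w i * ((fun j => V j i) ⬝ᵥ x) := by
      rw [dotProduct, Finset.mul_sum]
      apply Finset.sum_congr rfl
      intro j _
      ring
    rw [e2, hw]
    simp only
    rw [mul_comm (Real.sqrt (lam i)) (α i), mul_assoc, ← hy i]
  have key2 : ∑ j, Aᵀ.mulVec β j * x j = β ⬝ᵥ A.mulVec x := by
    have : Aᵀ.mulVec β ⬝ᵥ x = β ⬝ᵥ A.mulVec x := by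
      rw [Matrix.mulVec_transpose, ← Matrix.dotProduct_mulVec]
    exact this
  have hγsum : ∑ j, γ j * x j
      = (∑ j, c j * x j) + (∑ i, α i * (Real.sqrt (lam i) * y i))
        + β ⬝ᵥ A.mulVec x := by
    have e : ∀ j, γ j = c j + V.mulVec w j + Aᵀ.mulVec β j := by
      intro j
      rw [hγ, gam]
      rfl
    calc ∑ j, γ j * x j
        = ∑ j, (c j * x j + V.mulVec w j * x j + Aᵀ.mulVec β j * x j) := by
          apply Finset.sum_congr rfl
          intro j _
          rw [e j]; ring
      _ = (∑ j, c j * x j) + (∑ j, V.mulVec w j * x j) + ∑ j, Aᵀ.mulVec β j * x j := by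
          rw [Finset.sum_add_distrib, Finset.sum_add_distrib]
      _ = (∑ j, c j * x j) + (∑ i, α i * (Real.sqrt (lam i) * y i)) + β ⬝ᵥ A.mulVec x := by
          rw [key1, key2]
  have hcx : c ⬝ᵥ x = ∑ j, c j * x j := rfl
  rw [Lfun, ← hγ, hcx]
  linarith [hS1, hS2, hS3, hγsum]

lemma dual_val {n k m : ℕ} (lam : Fin k → ℝ) (hlam : ∀ i, 0 ≤ lam i)
    (V : Matrix (Fin n) (Fin k) ℝ) (c : Fin n → ℝ)
    (A : Matrix (Fin m) (Fin n) ℝ) (b : Fin m → ℝ) (η : ℝ) (hη : 0 < η)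
    (z : Fin n → ℝ) (hz : ∀ j, z j = 0 ∨ z j = 1)
    (x : Fin n → ℝ) (t : ℝ) (ht : 0 ≤ t)
    (hxz : ∀ j, z j = 0 → x j = 0)
    (hstat : ∀ j, z j ≠ 0 →
      c j + (∑ i, 2 * lam i * ((fun l => V l i) ⬝ᵥ x) * V j i) + 2 * η⁻¹ * x j
        + (∑ i, 2 * t * max 0 (A.mulVec x i - b i) * A i j) = 0) :
    gfun V lam c η x ≤ Lfun V lam c A b η z
      (fun i => 2 * Real.sqrt (lam i) * ((fun l => V l i) ⬝ᵥ x))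
      (fun i => 2 * t * max 0 (A.mulVec x i - b i)) := by
  classical
  have hη0 : η ≠ 0 := ne_of_gt hη
  set d : Fin k → ℝ := fun i => (fun l => V l i) ⬝ᵥ x with hd
  set α : Fin k → ℝ := fun i => 2 * Real.sqrt (lam i) * d i with hα
  set β : Fin m → ℝ := fun i => 2 * t * max 0 (A.mulVec x i - b i) with hβ
  set γ := gam V lam c A α β with hγ
  set SV : Fin n → ℝ := fun j => ∑ i, 2 * lam i * d i * V j i with hSV
  set SA : Fin n → ℝ := fun j => ∑ i, 2 * t * max 0 (A.mulVec x i - b i) * A i j with hSA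
  have hstat' : ∀ j, z j ≠ 0 → c j + SV j + 2 * η⁻¹ * x j + SA j = 0 := hstat
  -- gamma coordinates
  have hγeq : ∀ j, γ j = c j + SV j + SA j := by
    intro j
    rw [hγ, gam]
    have e0 : (c + V.mulVec (fun i => Real.sqrt (lam i) * α i) + Aᵀ.mulVec β) j
        = c j + V.mulVec (fun i => Real.sqrt (lam i) * α i) j + Aᵀ.mulVec β j := rfl
    rw [e0]
    congr 1
    · congr 1
      rw [Matrix.mulVec, dotProduct, hSV]
      apply Finset.sum_congr rfl
      intro i _
      simp only [hα]
      linear_combination (2 * V j i * d i) * (Real.mul_self_sqrt (hlam i))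
    · rw [Matrix.mulVec, dotProduct, hSA]
      apply Finset.sum_congr rfl
      intro i _
      rw [Matrix.transpose_apply]
      simp only [hβ]
      ring
  -- (a)
  have hA1 : (1/4) * (∑ i, (α i)^2) = ∑ i, lam i * (d i)^2 := by
    rw [Finset.mul_sum]
    apply Finset.sum_congr rfl
    intro i _
    simp only [hα]
    linear_combination (d i)^2 * (Real.sq_sqrt (hlam i))
  -- (c)
  have hA2 : (η/4) * (∑ j, z j * (γ j)^2) = η⁻¹ * (∑ j, (x j)^2) := by
    have hterm : ∀ j, z j * (γ j)^2 = 4 * η⁻¹ * η⁻¹ * (x j)^2 := by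
      intro j
      rcases hz j with h0 | h1
      · rw [h0, hxz j h0]
        ring
      · have hne : z j ≠ 0 := by rw [h1]; norm_num
        have : γ j = -(2 * η⁻¹ * x j) := by
          have := hstat' j hne
          rw [hγeq j]
          linarith
        rw [h1, this]
        ring
      
    rw [Finset.sum_congr rfl (fun j _ => hterm j), ← Finset.mul_sum, ← mul_assoc]
    congr 1
    field_simp
  -- (e)
  have hA3 : β ⬝ᵥ A.mulVec x
      = -(∑ j, c j * x j) - 2 * (∑ i, lam i * (d i)^2) - 2 * η⁻¹ * (∑ j, (x j)^2) := by
    have e1 : β ⬝ᵥ A.mulVec x = Aᵀ.mulVec β ⬝ᵥ x := by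
      rw [Matrix.mulVec_transpose, ← Matrix.dotProduct_mulVec]
    have e2 : Aᵀ.mulVec β ⬝ᵥ x = ∑ j, Aᵀ.mulVec β j * x j := rfl
    have e3 : ∀ j, Aᵀ.mulVec β j = SA j := by
      intro j
      rw [Matrix.mulVec, dotProduct, hSA]
      apply Finset.sum_congr rfl
      intro i _
      rw [Matrix.transpose_apply]
      simp only [hβ]
      ring
    have e4 : ∀ j, SA j * x j = (-(c j) - SV j - 2 * η⁻¹ * x j) * x j := by
      intro j
      by_cases hzj : z j = 0
      · rw [hxz j hzj]
        ring
      · have := hstat' j hzj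
        have hSAj : SA j = -(c j) - SV j - 2 * η⁻¹ * x j := by linarith
        rw [hSAj]
    have e5 : ∑ j, SA j * x j
        = -(∑ j, c j * x j) - (∑ j, SV j * x j) - 2 * η⁻¹ * (∑ j, (x j)^2) := by
      have e4' : ∀ j, SA j * x j
          = -(c j * x j) - SV j * x j - 2 * η⁻¹ * (x j)^2 := by
        intro j
        rw [e4 j]; ring
      calc ∑ j, SA j * x j = ∑ j, (-(c j * x j) - SV j * x j - 2 * η⁻¹ * (x j)^2) :=
            Finset.sum_congr rfl (fun j _ => e4' j)
        _ = _ := by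
            rw [Finset.sum_sub_distrib, Finset.sum_sub_distrib, Finset.sum_neg_distrib,
              ← Finset.mul_sum]
    have e6 : ∑ j, SV j * x j = 2 * ∑ i, lam i * (d i)^2 := by
      have e7 : ∀ j, SV j * x j = ∑ i, 2 * lam i * d i * V j i * x j := by
        intro j
        rw [hSV, Finset.sum_mul]
      rw [Finset.sum_congr rfl (fun j _ => e7 j), Finset.sum_comm]
      rw [Finset.mul_sum]
      apply Finset.sum_congr rfl
      intro i _
      have e8 : ∑ j, 2 * lam i * d i * V j i * x j
          = 2 * lam i * d i * ∑ j, V j i * x j := by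
        rw [Finset.mul_sum]
        apply Finset.sum_congr rfl
        intro j _
        ring
      rw [e8]
      have e9 : ∑ j, V j i * x j = d i := rfl
      rw [e9]
      ring
    rw [e1, e2]
    calc ∑ j, Aᵀ.mulVec β j * x j = ∑ j, SA j * x j := by
          apply Finset.sum_congr rfl
          intro j _
          rw [e3 j]
      _ = -(∑ j, c j * x j) - (∑ j, SV j * x j) - 2 * η⁻¹ * (∑ j, (x j)^2) := e5
      _ = -(∑ j, c j * x j) - 2 * (∑ i, lam i * (d i)^2) - 2 * η⁻¹ * (∑ j, (x j)^2) := by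
          rw [e6]
  -- (d)
  have hA4 : 0 ≤ ∑ i, β i * (A.mulVec x i - b i) := by
    apply Finset.sum_nonneg
    intro i _
    simp only [hβ]
    rcases le_or_gt (A.mulVec x i - b i) 0 with h | h
    · rw [max_eq_left h]
      nlinarith [h, ht]
    · rw [max_eq_right h.le]
      have := mul_nonneg (mul_nonneg (by linarith : (0:ℝ) ≤ 2*t) h.le) h.le
      exact this
  have hA5 : β ⬝ᵥ b = β ⬝ᵥ A.mulVec x - ∑ i, β i * (A.mulVec x i - b i) := by
    rw [dotProduct, dotProduct, ← Finset.sum_sub_distrib]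
    apply Finset.sum_congr rfl
    intro i _
    ring
  have hcx : c ⬝ᵥ x = ∑ j, c j * x j := rfl
  rw [gfun, Lfun, ← hγ, hcx]
  have hd' : ∀ i : Fin k, (fun j => V j i) ⬝ᵥ x = d i := fun i => rfl
  simp only [hd']
  linarith [hA1, hA2, hA3, hA4, hA5]

/-- inner strong duality for a fixed support `z`. -/
theorem stmt6
    (n k m : ℕ) (hn : 1 ≤ n) (hk1 : 1 ≤ k) (hkn : k ≤ n)
    (lam : Fin k → ℝ) (hlam : ∀ i, 0 ≤ lam i)
    (V : Matrix (Fin n) (Fin k) ℝ) (c : Fin n → ℝ)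
    (A : Matrix (Fin m) (Fin n) ℝ) (b : Fin m → ℝ) (η : ℝ) (hη : 0 < η)
    (z : Fin n → ℝ) (hz : ∀ j, z j = 0 ∨ z j = 1)
    (hfeas : ∃ x : Fin n → ℝ,
      (∀ i, A.mulVec x i ≤ b i) ∧ (∀ j, z j = 0 → x j = 0)) :
    sInf {w | ∃ (x : Fin n → ℝ) (y : Fin k → ℝ),
        (∀ i, A.mulVec x i ≤ b i) ∧
        (∀ j, z j = 0 → x j = 0) ∧
        (∀ i : Fin k, Real.sqrt (lam i) * y i
            = Real.sqrt (lam i) * ((fun j => V j i) ⬝ᵥ x)) ∧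
        w = c ⬝ᵥ x + (∑ i, lam i * (y i)^2) + η⁻¹ * (∑ j, (x j)^2)}
    = sSup {u | ∃ (α : Fin k → ℝ) (β : Fin m → ℝ),
        (∀ i, (0:ℝ) ≤ β i) ∧ u = Lfun V lam c A b η z α β} := by
  classical
  obtain ⟨x₀, hx₀A, hx₀z⟩ := hfeas
  set Pset : Set ℝ := {w | ∃ (x : Fin n → ℝ) (y : Fin k → ℝ),
        (∀ i, A.mulVec x i ≤ b i) ∧
        (∀ j, z j = 0 → x j = 0) ∧
        (∀ i : Fin k, Real.sqrt (lam i) * y i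
            = Real.sqrt (lam i) * ((fun j => V j i) ⬝ᵥ x)) ∧
        w = c ⬝ᵥ x + (∑ i, lam i * (y i)^2) + η⁻¹ * (∑ j, (x j)^2)} with hPset
  set Dset : Set ℝ := {u | ∃ (α : Fin k → ℝ) (β : Fin m → ℝ),
        (∀ i, (0:ℝ) ≤ β i) ∧ u = Lfun V lam c A b η z α β} with hDset
  have hPmem : ∀ x' : Fin n → ℝ, (∀ i, A.mulVec x' i ≤ b i) →
      (∀ j, z j = 0 → x' j = 0) → gfun V lam c η x' ∈ Pset := by
    intro x' h1 h2
    exact ⟨x', fun i => (fun j => V j i) ⬝ᵥ x', h1, h2, fun i => rfl, rfl⟩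
  have hPval : ∀ w ∈ Pset, ∃ x', (∀ i, A.mulVec x' i ≤ b i) ∧
      (∀ j, z j = 0 → x' j = 0) ∧ w = gfun V lam c η x' := by
    rintro w ⟨x', y, h1, h2, h3, rfl⟩
    refine ⟨x', h1, h2, ?_⟩
    rw [gfun]
    congr 1
    congr 1
    apply Finset.sum_congr rfl
    intro i _
    rcases eq_or_lt_of_le (hlam i) with h0 | hpos
    · rw [← h0]
      ring
    · have hs : Real.sqrt (lam i) ≠ 0 := ne_of_gt (Real.sqrt_pos.mpr hpos)
      have hyx := mul_left_cancel₀ hs (h3 i)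
      rw [hyx]
  have hweak : ∀ u ∈ Dset, ∀ w ∈ Pset, u ≤ w := by
    rintro u ⟨α, β, hβ, rfl⟩ w hw
    obtain ⟨x', h1, h2, rfl⟩ := hPval w hw
    have h := weak_dual lam hlam V c A b η hη z hz α β hβ x'
      (fun i => (fun j => V j i) ⬝ᵥ x') h1 h2 (fun i => rfl)
    exact h
  have hP0 : gfun V lam c η x₀ ∈ Pset := hPmem x₀ hx₀A hx₀z
  have hD0 : Lfun V lam c A b η z 0 0 ∈ Dset := ⟨0, 0, fun i => le_refl 0, rfl⟩
  have hbddP : BddBelow Pset := ⟨Lfun V lam c A b η z 0 0, fun w hw => hweak _ hD0 w hw⟩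
  have hbddD : BddAbove Dset := ⟨gfun V lam c η x₀, fun u hu => hweak u hu _ hP0⟩
  have hle1 : sSup Dset ≤ sInf Pset :=
    csSup_le ⟨_, hD0⟩ (fun u hu => le_csInf ⟨_, hP0⟩ (fun w hw => hweak u hu w hw))
  -- penalty sequence
  have hchoice : ∀ q : ℕ, ∃ x : Fin n → ℝ,
      (∀ j, z j = 0 → x j = 0) ∧
      gfun V lam c η x ≤ gfun V lam c η x₀ ∧
      (∑ j, (x j)^2) ≤ 2*η*(gfun V lam c η x₀ + (η/2) * (∑ j, (c j)^2)) + 1 ∧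
      ((q:ℝ)+1) * (∑ i, (max 0 (A.mulVec x i - b i))^2)
          ≤ gfun V lam c η x₀ + (η/2) * (∑ j, (c j)^2) ∧
      (∀ j, z j ≠ 0 →
        c j + (∑ i, 2 * lam i * ((fun l => V l i) ⬝ᵥ x) * V j i) + 2 * η⁻¹ * x j
          + (∑ i, 2 * ((q:ℝ)+1) * max 0 (A.mulVec x i - b i) * A i j) = 0) := by
    intro q
    exact penalty_key lam hlam V c A b η hη z x₀ hx₀A hx₀z ((q:ℝ)+1) (by positivity)
  choose xs hs1 hs2 hs3 hs4 hs5 using hchoice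
  have hqle : ∀ q : ℕ, gfun V lam c η (xs q) ≤ sSup Dset := by
    intro q
    have hd := dual_val lam hlam V c A b η hη z hz (xs q) ((q:ℝ)+1)
      (by positivity) (hs1 q) (hs5 q)
    have hmem : Lfun V lam c A b η z
        (fun i => 2 * Real.sqrt (lam i) * ((fun l => V l i) ⬝ᵥ (xs q)))
        (fun i => 2 * ((q:ℝ)+1) * max 0 (A.mulVec (xs q) i - b i)) ∈ Dset := by
      refine ⟨_, _, ?_, rfl⟩
      intro i
      have h1 : (0:ℝ) ≤ ((q:ℝ)+1) := by positivity
      have h2 : (0:ℝ) ≤ max 0 (A.mulVec (xs q) i - b i) := le_max_left _ _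
      positivity
    exact hd.trans (le_csSup hbddD hmem)
  -- compact limit
  obtain ⟨xh, hxhB, ψ, hψ, htend⟩ :=
    (isCompact_sumsq (2*η*(gfun V lam c η x₀ + (η/2) * (∑ j, (c j)^2)) + 1)).tendsto_subseq
      (fun q => hs3 q)
  have hcoord : ∀ j, Filter.Tendsto (fun q => xs (ψ q) j) Filter.atTop (nhds (xh j)) := by
    intro j
    exact ((continuous_apply j).continuousAt.tendsto).comp htend
  have hxhE : ∀ j, z j = 0 → xh j = 0 := by
    intro j hzj
    have h1 : ∀ q : ℕ, xs (ψ q) j = 0 := fun q => hs1 (ψ q) j hzj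
    have h2 : Filter.Tendsto (fun q : ℕ => xs (ψ q) j) Filter.atTop (nhds 0) := by
      simp only [h1]
      exact tendsto_const_nhds
    exact tendsto_nhds_unique (hcoord j) h2
  have hψq : ∀ q : ℕ, (q : ℝ) ≤ (ψ q : ℝ) := by
    intro q
    exact_mod_cast hψ.le_apply
  have hC : (0:ℝ) ≤ gfun V lam c η x₀ + (η/2) * (∑ j, (c j)^2) := by
    have h := hs4 0
    have hpen : (0:ℝ) ≤ ((0:ℕ):ℝ)+1 := by norm_num
    have hsum : (0:ℝ) ≤ ∑ i, (max 0 (A.mulVec (xs 0) i - b i))^2 :=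
      Finset.sum_nonneg fun i _ => sq_nonneg _
    nlinarith
  have hxhA : ∀ i, A.mulVec xh i ≤ b i := by
    intro i
    set C := gfun V lam c η x₀ + (η/2) * (∑ j, (c j)^2) with hCdef
    have hcont : Continuous (fun x : Fin n → ℝ => (max 0 (A.mulVec x i - b i))^2) := by
      unfold Matrix.mulVec
      simp only [dotProduct]
      fun_prop
    have htf : Filter.Tendsto (fun q : ℕ => (max 0 (A.mulVec (xs (ψ q)) i - b i))^2)
        Filter.atTop (nhds ((max 0 (A.mulVec xh i - b i))^2)) :=
      (hcont.continuousAt.tendsto).comp htend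
    have hub : ∀ q : ℕ, (max 0 (A.mulVec (xs (ψ q)) i - b i))^2 ≤ C / ((q:ℝ)+1) := by
      intro q
      have h4 := hs4 (ψ q)
      have hsingle : (max 0 (A.mulVec (xs (ψ q)) i - b i))^2
          ≤ ∑ l, (max 0 (A.mulVec (xs (ψ q)) l - b l))^2 :=
        Finset.single_le_sum (f := fun l => (max 0 (A.mulVec (xs (ψ q)) l - b l))^2)
          (fun l _ => sq_nonneg _) (Finset.mem_univ i)
      have hq1 : (0:ℝ) < (q:ℝ)+1 := by positivity
      have hq2 : (0:ℝ) < (ψ q:ℝ)+1 := by positivity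
      have hq3 : (q:ℝ)+1 ≤ (ψ q:ℝ)+1 := by linarith [hψq q]
      rw [le_div_iff₀ hq1]
      calc (max 0 (A.mulVec (xs (ψ q)) i - b i))^2 * ((q:ℝ)+1)
          ≤ (∑ l, (max 0 (A.mulVec (xs (ψ q)) l - b l))^2) * ((ψ q:ℝ)+1) := by
            apply mul_le_mul hsingle hq3 hq1.le
            exact Finset.sum_nonneg fun l _ => sq_nonneg _
        _ = ((ψ q:ℝ)+1) * (∑ l, (max 0 (A.mulVec (xs (ψ q)) l - b l))^2) := by ring
        _ ≤ C := h4
    have hzero : Filter.Tendsto (fun q : ℕ => C / ((q:ℝ)+1)) Filter.atTop (nhds 0) := by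
      apply Filter.Tendsto.div_atTop tendsto_const_nhds
      apply Filter.tendsto_atTop_add_const_right
      exact tendsto_natCast_atTop_atTop
    have hle0 : (max 0 (A.mulVec xh i - b i))^2 ≤ 0 :=
      le_of_tendsto_of_tendsto' htf hzero hub
    have hmax0 : max 0 (A.mulVec xh i - b i) = 0 := by
      have h0 : (0:ℝ) ≤ max 0 (A.mulVec xh i - b i) := le_max_left _ _
      nlinarith
    have := le_max_right (0:ℝ) (A.mulVec xh i - b i)
    rw [hmax0] at this
    linarith
  have hgt : Filter.Tendsto (fun q : ℕ => gfun V lam c η (xs (ψ q))) Filter.atTop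
      (nhds (gfun V lam c η xh)) :=
    ((gfun_continuous V lam c η).continuousAt.tendsto).comp htend
  have h1 : gfun V lam c η xh ≤ sSup Dset :=
    le_of_tendsto hgt (Filter.Eventually.of_forall fun q => hqle (ψ q))
  have h2 : sInf Pset ≤ gfun V lam c η xh := csInf_le hbddP (hPmem xh hxhA hxhE)
  exact le_antisymm (le_trans h2 h1) hle1
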